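/- Let V : ℝ → ℝ be even, non-negative, non-increasing on (0,∞), integrable with finite first moment, let a := ∫₀^∞ V, and for γ > 0 define h_γ(x) := (1/(2aγ)) ∫₀^∞ [V(y + 2γ√a − x) − V(y + x)] y dy. Then h_γ is non-decreasing on ℝ, and |h_γ(x)| ≤ C/γ for all x ∈ [0, 2γ√a], where C := (1/(2a)) ∫₀^∞ y V(y) dy. -/
import Mathlib

open MeasureTheory Set Filter
open scoped ENNReal Topology

noncomputable section

/-- The auxiliary boundary function
`h_γ(x) = (1/(2aγ)) ∫₀^∞ [V(y + 2γ√a − x) − V(y + x)] y dy`. -/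
def hGam (V : ℝ → ℝ) (a γ x : ℝ) : ℝ :=
  (1 / (2 * a * γ)) *
    ∫ y in Ioi (0 : ℝ), (V (y + 2 * γ * Real.sqrt a - x) - V (y + x)) * y

namespace HGamAux

variable {V : ℝ → ℝ}

lemma intA (hVnonneg : ∀ x, 0 ≤ V x) (hVint : Integrable V)
    (hVmom : Integrable (fun x => |x| * V x)) (c : ℝ) :
    Integrable (fun t => V t * (t - c)) := by
  have hdom : Integrable (fun t => |t| * V t + |c| * V t) := hVmom.add (hVint.const_mul _)
  refine hdom.mono (hVint.1.mul ((continuous_id.sub continuous_const).aestronglyMeasurable)) ?_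
  filter_upwards with t
  simp only [Real.norm_eq_abs]
  have h1 : |V t * (t - c)| = V t * |t - c| := by rw [abs_mul, abs_of_nonneg (hVnonneg t)]
  rw [h1, abs_of_nonneg (by have := hVnonneg t; positivity : (0:ℝ) ≤ |t| * V t + |c| * V t)]
  have h2 : |t - c| ≤ |t| + |c| := abs_sub t c
  nlinarith [hVnonneg t, abs_nonneg t, abs_nonneg c]

lemma intA' (hVnonneg : ∀ x, 0 ≤ V x) (hVint : Integrable V)
    (hVmom : Integrable (fun x => |x| * V x)) (c : ℝ) :
    Integrable (fun y => V (y + c) * y) := by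
  have h := (intA hVnonneg hVint hVmom c).comp_add_right c
  simpa using h

/-- `W c = ∫_{t>c} V t * (t - c)`. -/
def W (V : ℝ → ℝ) (c : ℝ) : ℝ := ∫ t in Ioi c, V t * (t - c)

lemma transW (c : ℝ) :
    ∫ y in Ioi (0 : ℝ), V (y + c) * y = W V c := by
  unfold W
  rw [← integral_indicator measurableSet_Ioi, ← integral_indicator measurableSet_Ioi,
    ← integral_add_right_eq_self (fun t => (Ioi c).indicator (fun t => V t * (t - c)) t) c]
  congr 1
  funext y
  by_cases h : 0 < y
  · have hy : y + c ∈ Ioi c := by simpa using h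
    simp [Set.indicator_of_mem hy, Set.indicator_of_mem (by simpa using h : y ∈ Ioi (0:ℝ))]
  · have hy : y + c ∉ Ioi c := by simpa using h
    simp [Set.indicator_of_notMem hy,
      Set.indicator_of_notMem (by simpa using h : y ∉ Ioi (0:ℝ))]

lemma W_nonneg (hVnonneg : ∀ x, 0 ≤ V x) (c : ℝ) : 0 ≤ W V c := by
  refine setIntegral_nonneg measurableSet_Ioi fun t ht => ?_
  exact mul_nonneg (hVnonneg t) (by simp at ht; linarith)

lemma W_anti (hVnonneg : ∀ x, 0 ≤ V x) (hVint : Integrable V)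
    (hVmom : Integrable (fun x => |x| * V x)) :
    Antitone (W V) := by
  intro c₁ c₂ h
  have step1 : W V c₂ ≤ ∫ t in Ioi c₂, V t * (t - c₁) := by
    refine setIntegral_mono_on ((intA hVnonneg hVint hVmom c₂).integrableOn)
      ((intA hVnonneg hVint hVmom c₁).integrableOn) measurableSet_Ioi fun t ht => ?_
    have h5 := mul_le_mul_of_nonneg_left (by simp at ht; linarith : t - c₂ ≤ t - c₁) (hVnonneg t)
    linarith
  have step2 : (∫ t in Ioi c₂, V t * (t - c₁)) ≤ ∫ t in Ioi c₁, V t * (t - c₁) := by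
    refine setIntegral_mono_set ((intA hVnonneg hVint hVmom c₁).integrableOn) ?_ ?_
    · filter_upwards [ae_restrict_mem measurableSet_Ioi] with t ht
      simp at ht
      exact mul_nonneg (hVnonneg t) (by linarith)
    · exact HasSubset.Subset.eventuallyLE (Ioi_subset_Ioi h)
  exact step1.trans step2

end HGamAux

open HGamAux

theorem stmt3 (V : ℝ → ℝ) (hVeven : ∀ x, V (-x) = V x) (hVnonneg : ∀ x, 0 ≤ V x)
    (hVmono : AntitoneOn V (Ioi (0 : ℝ))) (hVint : Integrable V)
    (hVmom : Integrable (fun x => |x| * V x)) (a C : ℝ)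
    (ha : a = ∫ x in Ioi (0 : ℝ), V x)
    (hC : C = (1 / (2 * a)) * ∫ y in Ioi (0 : ℝ), y * V y) :
    ∀ γ : ℝ, 0 < γ →
      Monotone (hGam V a γ) ∧
      ∀ x ∈ Icc (0 : ℝ) (2 * γ * Real.sqrt a), |hGam V a γ x| ≤ C / γ := by
  intro γ hγ
  set b : ℝ := 2 * γ * Real.sqrt a with hb
  have key : ∀ x, hGam V a γ x = (1 / (2 * a * γ)) * (W V (b - x) - W V x) := by
    intro x
    unfold hGam
    rw [← hb]
    congr 1
    have hcong : ∀ y : ℝ, (V (y + b - x) - V (y + x)) * y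
        = V (y + (b - x)) * y - V (y + x) * y := by
      intro y
      rw [show y + b - x = y + (b - x) from by ring]; ring
    rw [setIntegral_congr_fun measurableSet_Ioi (fun y _ => hcong y),
      integral_sub ((intA' hVnonneg hVint hVmom (b - x)).integrableOn)
        ((intA' hVnonneg hVint hVmom x).integrableOn),
      transW, transW]
  have hW0 : W V 0 = ∫ y in Ioi (0 : ℝ), y * V y := by
    unfold W
    refine setIntegral_congr_fun measurableSet_Ioi fun t _ => ?_
    ring
  have hann : 0 ≤ a := by
    rw [ha]
    exact setIntegral_nonneg measurableSet_Ioi fun t _ => hVnonneg t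
  rcases eq_or_lt_of_le hann with hzero | hpos
  · -- a = 0 : everything is zero
    have h0 : ∀ x, hGam V a γ x = 0 := by
      intro x; rw [key]; rw [← hzero]; simp
    constructor
    · intro x y _; rw [h0, h0]
    · intro x _
      rw [h0, hC, ← hzero]
      simp
  · -- a > 0
    have hk : 0 < 1 / (2 * a * γ) := by positivity
    have hanti := W_anti hVnonneg hVint hVmom
    constructor
    · intro x₁ x₂ hx
      rw [key, key]
      refine mul_le_mul_of_nonneg_left ?_ hk.le
      have h1 : W V (b - x₁) ≤ W V (b - x₂) := hanti (by linarith)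
      have h2 : W V x₂ ≤ W V x₁ := hanti hx
      linarith
    · intro x hx
      obtain ⟨hx0, hxb⟩ := hx
      have h1 : W V (b - x) ≤ W V 0 := hanti (by linarith)
      have h2 : W V x ≤ W V 0 := hanti hx0
      have h3 : 0 ≤ W V (b - x) := W_nonneg hVnonneg _
      have h4 : 0 ≤ W V x := W_nonneg hVnonneg _
      have habs : |W V (b - x) - W V x| ≤ W V 0 := by
        rw [abs_sub_le_iff]; constructor <;> linarith
      have ha' : a ≠ 0 := hpos.ne'
      have hγ' : γ ≠ 0 := hγ.ne'
      calc |hGam V a γ x| ≤ 1 / (2 * a * γ) * W V 0 := by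
            rw [key, abs_mul, abs_of_pos hk]
            exact mul_le_mul_of_nonneg_left habs hk.le
        _ = C / γ := by rw [hC, ← hW0]; field_simp
  end
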